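/- arXiv:1412.3475 — 5 statements merged into one kernel-verified Lean document; each statement's English description precedes it below -/
import Mathlib

section
/- For every positive integer n not divisible by 3, the (3,n)-rational q,t-Catalan polynomial satisfies C_{3,n}(q,t) = Σ_{s=0}^{⌊n/3⌋} Σ_{a=s}^{n-2s-1} q^{n-a-s-1} t^{a}; equivalently, C_{3,n}(q,t) = Σ_{s=0}^{⌊n/3⌋} Σ_{(a,d) : a ≥ s, d ≥ s, a+s+d+1=n} q^{d} t^{a}. -/
open MvPolynomial

/-- An `(m,n)`-Dyck path: a north/east lattice path from `(0,0)` to `(m,n)` staying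
weakly above the diagonal `y = (n/m)x`.  Such a path is encoded by recording, for each
of the `m` columns (indexed `0,…,m-1` from left to right), the number of cells of that
column lying above the path; this gives an antitone sequence, and the diagonal
condition for the east step in column `i` reads `m * c i ≤ n * (m - 1 - i)`. -/
def DyckPath (m n : ℕ) : Type :=
  {c : Fin m → Fin (n + 1) //
    (∀ i j : Fin m, i ≤ j → (c j : ℕ) ≤ (c i : ℕ)) ∧
      ∀ i : Fin m, m * (c i : ℕ) ≤ n * (m - 1 - (i : ℕ))}

noncomputable instance instFintypeDyckPath (m n : ℕ) : Fintype (DyckPath m n) := by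
  classical
  unfold DyckPath
  infer_instance

namespace DyckPath

variable {m n : ℕ}

/-- `λ(Π)`, the set of cells of the `m × n` lattice lying above the path `Π`.
The cell `(i, j)` (with `i : Fin m`, `j : Fin n`) is the cell in column `i + 1`
(from the left) and row `j + 1` (from the bottom) in the paper's 1-based indexing. -/
def cellsAbove (P : DyckPath m n) : Set (Fin m × Fin n) :=
  {x | n - (P.1 x.1 : ℕ) ≤ (x.2 : ℕ)}

/-- `arm(x)`: the number of cells of `λ(Π)` strictly east of `x` (in the row of `x`). -/
noncomputable def arm (P : DyckPath m n) (x : Fin m × Fin n) : ℕ :=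
  {y ∈ P.cellsAbove | x.1 < y.1 ∧ y.2 = x.2}.ncard

/-- `leg(x)`: the number of cells of `λ(Π)` strictly south of `x` (in the column of `x`). -/
noncomputable def leg (P : DyckPath m n) (x : Fin m × Fin n) : ℕ :=
  {y ∈ P.cellsAbove | y.1 = x.1 ∧ y.2 < x.2}.ncard

end DyckPath

/-- The dinv condition `arm/(leg+1) < m/n < (arm+1)/leg` for a cell with given arm `a`
and leg `l`, the right inequality being interpreted as true when `l = 0`. -/
def dinvCond (m n a l : ℕ) : Prop :=
  (a : ℚ) / ((l : ℚ) + 1) < (m : ℚ) / (n : ℚ) ∧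
    (l = 0 ∨ (m : ℚ) / (n : ℚ) < ((a : ℚ) + 1) / (l : ℚ))

namespace DyckPath

variable {m n : ℕ}

/-- `dinv(Π)`: the number of cells `x ∈ λ(Π)` with
`arm(x)/(leg(x)+1) < m/n < (arm(x)+1)/leg(x)`. -/
noncomputable def dinv (P : DyckPath m n) : ℕ :=
  {x ∈ P.cellsAbove | dinvCond m n (P.arm x) (P.leg x)}.ncard

/-- `area(Π)`: the number of cells of the lattice lying entirely between the path and
the diagonal, i.e. cells lying entirely weakly above the diagonal `y = (n/m)x` and
below the path. -/
noncomputable def area (P : DyckPath m n) : ℕ :=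
  {x : Fin m × Fin n | n * ((x.1 : ℕ) + 1) ≤ m * (x.2 : ℕ) ∧ x ∉ P.cellsAbove}.ncard

end DyckPath

/-- The `(m,n)`-rational `q,t`-Catalan polynomial `C_{m,n}(q,t)`, with `q = X 0` and
`t = X 1`:  `C_{m,n}(q,t) = Σ_Π q^{dinv(Π)} t^{area(Π)}` over all `(m,n)`-Dyck paths. -/
noncomputable def ratCatalan (m n : ℕ) : MvPolynomial (Fin 2) ℤ :=
  ∑ P : DyckPath m n, X 0 ^ P.dinv * X 1 ^ P.area

/-- The rank of the cell `(i, j)` of the `3 × n` lattice: in the paper's 1-based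
coordinates `(a, b) = (i+1, j+1)`, this is `R(a,b) = -a·n + 3(b-1)`. -/
def cellRank (n : ℕ) (x : Fin 3 × Fin n) : ℤ :=
  3 * (x.2 : ℤ) - ((x.1 : ℤ) + 1) * (n : ℤ)

/-- The set of positive ranks of the `3 × n` lattice: these, in increasing order, are
the entries of the rank word. -/
def posRank (n : ℕ) : Set ℤ :=
  {r | 0 < r ∧ ∃ x : Fin 3 × Fin n, cellRank n x = r}

/-- The set of marked ranks of a `(3,n)`-Dyck path: the ranks of the cells above
the path. -/
def markedRank {n : ℕ} (P : DyckPath 3 n) : Set ℤ :=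
  cellRank n '' P.cellsAbove

/-- `skips(Π)`: the number of skips of `Π`, i.e. of maximal blocks of consecutive
unmarked entries of the rank word of `Π` having at least one marked entry to the left
and at least one marked entry to the right.  Each such block is counted through its
rightmost entry `r`: `r` is an unmarked entry, some marked entry lies to its left, and
the next entry of the rank word after `r` is marked. -/
noncomputable def DyckPath.skips {n : ℕ} (P : DyckPath 3 n) : ℕ :=
  {r : ℤ | r ∈ posRank n ∧ r ∉ markedRank P ∧
    (∃ l ∈ markedRank P, l < r) ∧
    ∃ s ∈ markedRank P, r < s ∧ ∀ t ∈ posRank n, r < t → s ≤ t}.ncard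

/-!
A `(3,n)`-Dyck path is determined by the numbers `a ≥ b` of cells above it in columns `0` and `1`
(column `2` is empty), subject to `3a ≤ 2n` and `3b ≤ n`; its area is `n - 1 - a - b`.
Put `k = ⌊n/3⌋`. A cell of column `1` has arm `0` and leg `< b ≤ k`, so it always contributes to
`dinv`. The cell of column `0` with leg `l` has arm `1` exactly when `l ≥ a - b`; as `3 ∤ n` it then
contributes iff `l ≥ k`, and otherwise iff `l ≤ k`. Hence
`dinv = b + min (a - b) (k + 1) + (a - max (a - b) k)`, and `(a, b) ↦ (a + b - dinv, area)` (the
first coordinate counts the skips of the path) is a bijection onto the index set of the double sum.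
-/

open Finset

namespace Set

theorem ncard_setOf_prod_eq_sum {α β : Type*} [Fintype α] [Fintype β] (p : α × β → Prop) :
    {x | p x}.ncard = ∑ a, {b | p (a, b)}.ncard := by
  classical
  simp only [ncard_eq_toFinset_card', toFinset_ofPred, Finset.card_filter]
  exact Fintype.sum_prod_type _

theorem ncard_fin_eq_card {n : ℕ} {q : Fin n → Prop} {S : Finset ℕ}
    (hq : ∀ j : Fin n, q j ↔ (j : ℕ) ∈ S) (hS : ∀ t ∈ S, t < n) :
    {j | q j}.ncard = #S := by
  rw [show {j | q j} = Fin.val ⁻¹' (S : Set ℕ) from Set.ext hq,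
    ncard_preimage_of_injective_subset_range Fin.val_injective fun t ht => ⟨⟨t, hS t ht⟩, rfl⟩,
    ncard_coe_finset]

end Set

theorem dinvCond_iff {m n a l : ℕ} (hn : 0 < n) :
    dinvCond m n a l ↔ n * a < m * (l + 1) ∧ (l = 0 ∨ m * l < n * (a + 1)) := by
  have hn' : (0 : ℚ) < n := by exact_mod_cast hn
  rw [dinvCond, div_lt_div_iff₀ (by positivity) hn']
  rcases Nat.eq_zero_or_pos l with rfl | hl
  · simp only [true_or, and_true]
    norm_cast
    constructor <;> intro h <;> linarith
  · have hl' : (0 : ℚ) < l := by exact_mod_cast hl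
    rw [div_lt_div_iff₀ hn' hl']
    simp only [hl.ne', false_or]
    norm_cast
    constructor <;> rintro ⟨h1, h2⟩ <;> constructor <;> linarith

def dinvOfColumns (n a b : ℕ) : ℕ :=
  b + min (a - b) (n / 3 + 1) + (a - max (a - b) (n / 3))

def threeColumns (n : ℕ) : Finset (ℕ × ℕ) :=
  {p ∈ range (n + 1) ×ˢ range (n + 1) | p.2 ≤ p.1 ∧ 3 * p.1 ≤ 2 * n ∧ 3 * p.2 ≤ n}

namespace DyckPath

section General

variable {m n : ℕ}

theorem leg_eq (P : DyckPath m n) (x : Fin m × Fin n) : P.leg x = x.2 - (n - P.1 x.1) := by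
  have hcol : {y ∈ P.cellsAbove | y.1 = x.1 ∧ y.2 < x.2} =
      Prod.mk x.1 '' {j : Fin n | n - P.1 x.1 ≤ (j : ℕ) ∧ j < x.2} := by
    ext ⟨i, j⟩
    simp only [cellsAbove, Set.mem_ofPred_eq, Set.mem_image, Prod.mk.injEq]
    aesop
  rw [leg, hcol, Set.ncard_image_of_injective _ (Prod.mk_right_injective x.1),
    Set.ncard_fin_eq_card (S := Ico (n - P.1 x.1) x.2) (by simp) (by simp; omega), Nat.card_Ico]

theorem arm_eq (P : DyckPath m n) (x : Fin m × Fin n) :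
    P.arm x = {i : Fin m | x.1 < i ∧ (i, x.2) ∈ P.cellsAbove}.ncard := by
  have hrow : {y ∈ P.cellsAbove | x.1 < y.1 ∧ y.2 = x.2} =
      (·, x.2) '' {i : Fin m | x.1 < i ∧ (i, x.2) ∈ P.cellsAbove} := by
    ext ⟨i, j⟩
    simp only [Set.mem_ofPred_eq, Set.mem_image, Prod.mk.injEq]
    aesop
  rw [arm, hrow, Set.ncard_image_of_injective _ (Prod.mk_left_injective x.2)]

end General

section Three

variable {n : ℕ} (P : DyckPath 3 n)

theorem col_two_eq_zero : (P.1 2 : ℕ) = 0 := by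
  simpa using P.2.2 2

theorem col_one_le_col_zero : (P.1 1 : ℕ) ≤ P.1 0 :=
  P.2.1 0 1 (by decide)

theorem three_mul_col_zero_le : 3 * (P.1 0 : ℕ) ≤ 2 * n := by
  have h := P.2.2 0
  simp only [Fin.val_zero] at h
  omega

theorem three_mul_col_one_le : 3 * (P.1 1 : ℕ) ≤ n := by
  simpa using P.2.2 1

theorem two_not_mem_cellsAbove (j : Fin n) : (2, j) ∉ P.cellsAbove := by
  simp [cellsAbove, col_two_eq_zero]

theorem arm_zero (j : Fin n) : P.arm (0, j) = if n - (P.1 1 : ℕ) ≤ j then 1 else 0 := by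
  rw [arm_eq]
  split_ifs with h
  · rw [Set.ncard_eq_one]
    refine ⟨1, Set.ext fun i => ?_⟩
    fin_cases i <;> simp [cellsAbove, col_two_eq_zero]
    omega
  · rw [Set.ncard_eq_zero]
    refine Set.ext fun i => ?_
    fin_cases i <;> simp [cellsAbove, col_two_eq_zero]
    omega

theorem arm_one (j : Fin n) : P.arm (1, j) = 0 := by
  rw [arm_eq, Set.ncard_eq_zero]
  refine Set.ext fun i => ?_
  fin_cases i <;> simp [two_not_mem_cellsAbove]

theorem dinv_eq (h3 : ¬ 3 ∣ n) : P.dinv = dinvOfColumns n (P.1 0) (P.1 1) := by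
  have hn : 0 < n := Nat.pos_of_ne_zero (by rintro rfl; exact h3 (dvd_zero 3))
  have hmod : n % 3 ≠ 0 := fun h => h3 (Nat.dvd_of_mod_eq_zero h)
  have hba := P.col_one_le_col_zero
  have ha := P.three_mul_col_zero_le
  have hb := P.three_mul_col_one_le
  rw [dinv, Set.ncard_setOf_prod_eq_sum, Fin.sum_univ_three]
  simp only [two_not_mem_cellsAbove, false_and, Set.ofPred_false, Set.ncard_empty, add_zero]
  simp only [cellsAbove, arm_zero, arm_one, leg_eq, dinvCond_iff hn]
  set a := (P.1 0 : ℕ)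
  set b := (P.1 1 : ℕ)
  rw [Set.ncard_fin_eq_card (S := Ico (n - a) (n - a + min (a - b) (n / 3 + 1)) ∪
      Ico (n - a + max (a - b) (n / 3)) n) (fun j => by simp; split_ifs <;> omega) (by simp; omega),
    Set.ncard_fin_eq_card (S := Ico (n - b) n) (by simp; omega) (by simp),
    card_union_of_disjoint (disjoint_left.2 (by simp; omega)), Nat.card_Ico, Nat.card_Ico,
    Nat.card_Ico, dinvOfColumns]
  omega

theorem area_eq (h3 : ¬ 3 ∣ n) : P.area = n - 1 - (P.1 0 + P.1 1) := by
  have hmod : n % 3 ≠ 0 := fun h => h3 (Nat.dvd_of_mod_eq_zero h)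
  have ha := P.three_mul_col_zero_le
  have hb := P.three_mul_col_one_le
  rw [area, Set.ncard_setOf_prod_eq_sum, Fin.sum_univ_three]
  simp only [cellsAbove, Fin.val_zero, Fin.val_one, Fin.val_two]
  rw [Set.ncard_fin_eq_card (S := Ico (n / 3 + 1) (n - P.1 0)) (by simp; omega) (by simp; omega),
    Set.ncard_fin_eq_card (S := Ico (n - n / 3) (n - P.1 1)) (by simp; omega) (by simp; omega),
    Set.ncard_fin_eq_card (S := ∅) (by simp; omega) (by simp), Nat.card_Ico, Nat.card_Ico,
    card_empty]
  omega

end Three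

def ofColumns {n a b : ℕ} (hba : b ≤ a) (ha : 3 * a ≤ 2 * n) (hb : 3 * b ≤ n) : DyckPath 3 n :=
  ⟨![⟨a, by omega⟩, ⟨b, by omega⟩, 0],
    fun i j hij => by fin_cases i <;> fin_cases j <;> simp_all [Fin.le_def],
    fun i => by fin_cases i <;> simp <;> omega⟩

end DyckPath

theorem ratCatalan_three_eq_sum_threeColumns {n : ℕ} (h3 : ¬ 3 ∣ n) :
    ratCatalan 3 n = ∑ p ∈ threeColumns n,
      X 0 ^ dinvOfColumns n p.1 p.2 * X 1 ^ (n - 1 - (p.1 + p.2)) := by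
  refine sum_bij' (fun P _ => ((P.1 0 : ℕ), (P.1 1 : ℕ)))
    (fun p hp => DyckPath.ofColumns (mem_filter.1 hp).2.1 (mem_filter.1 hp).2.2.1
      (mem_filter.1 hp).2.2.2) ?_ (fun _ _ => mem_univ _) ?_ (fun _ _ => rfl) ?_
  · intro P _
    have := P.col_one_le_col_zero
    have := P.three_mul_col_zero_le
    have := P.three_mul_col_one_le
    simp only [threeColumns, mem_filter, mem_product, mem_range]
    omega
  · intro P _
    refine Subtype.ext (funext fun i => Fin.ext ?_)
    fin_cases i
    · rfl
    · rfl
    · exact P.col_two_eq_zero.symm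
  · intro P _
    rw [P.dinv_eq h3, P.area_eq h3]

/-- The column pair `(a, b)` with `a + b = s + d` and `dinvOfColumns n a b = d`. With
`k = n / 3`, the branches are the regimes `a ≤ k`, `a - b ≤ k < a` and `k < a - b`, in which
`dinvOfColumns n a b` equals `a`, `2a - k` and `2b + k + 1` respectively. -/
def columnsOfDinv (n s d : ℕ) : ℕ × ℕ :=
  if d ≤ n / 3 then (d, s)
  else if (d - n / 3) % 2 = 0 then ((d + n / 3) / 2, s + (d - n / 3) / 2)
  else (s + (d + n / 3 + 1) / 2, (d - n / 3 - 1) / 2)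

theorem sum_threeColumns_eq_sum_Icc {M : Type*} [AddCommMonoid M] {n : ℕ} (h3 : ¬ 3 ∣ n)
    (f : ℕ → ℕ → M) :
    ∑ p ∈ threeColumns n, f (dinvOfColumns n p.1 p.2) (n - 1 - (p.1 + p.2)) =
      ∑ s ∈ range (n / 3 + 1), ∑ a ∈ Icc s (n - 2 * s - 1), f (n - a - s - 1) a := by
  have hmod : n % 3 ≠ 0 := fun h => h3 (Nat.dvd_of_mod_eq_zero h)
  rw [sum_sigma']
  refine sum_nbij' (fun p => ⟨p.1 + p.2 - dinvOfColumns n p.1 p.2, n - 1 - (p.1 + p.2)⟩)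
    (fun x => columnsOfDinv n x.1 (n - x.2 - x.1 - 1)) ?_ ?_ ?_ ?_ ?_
  · intro p hp
    simp only [threeColumns, mem_filter, mem_product, mem_range] at hp
    simp only [mem_sigma, mem_range, mem_Icc, dinvOfColumns]
    omega
  · intro x hx
    simp only [mem_sigma, mem_range, mem_Icc] at hx
    simp only [columnsOfDinv]
    split_ifs <;> simp only [threeColumns, mem_filter, mem_product, mem_range] <;> omega
  · rintro ⟨a, b⟩ hp
    simp only [threeColumns, mem_filter, mem_product, mem_range] at hp
    simp only [columnsOfDinv]
    split_ifs <;> simp only [dinvOfColumns, Prod.mk.injEq] at * <;> omega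
  · rintro ⟨s, a⟩ hx
    simp only [mem_sigma, mem_range, mem_Icc] at hx
    simp only [columnsOfDinv]
    split_ifs <;> simp only [dinvOfColumns, Sigma.mk.injEq, heq_eq_eq] <;> omega
  · intro p hp
    simp only [threeColumns, mem_filter, mem_product, mem_range] at hp
    simp only [dinvOfColumns]
    congr 1
    omega

theorem sum_Icc_eq_sum_filter_add_eq {M : Type*} [AddCommMonoid M] {n : ℕ} (hn : 0 < n) (s : ℕ)
    (f : ℕ → ℕ → M) :
    ∑ a ∈ Icc s (n - 2 * s - 1), f (n - a - s - 1) a =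
      ∑ p ∈ (range n ×ˢ range n).filter
          (fun p : ℕ × ℕ => s ≤ p.1 ∧ s ≤ p.2 ∧ p.1 + s + p.2 + 1 = n), f p.2 p.1 := by
  refine sum_nbij' (fun a => (a, n - a - s - 1)) Prod.fst ?_ ?_ (fun _ _ => rfl) ?_ (fun _ _ => rfl)
  · intro a ha
    simp only [mem_Icc] at ha
    simp only [mem_filter, mem_product, mem_range]
    omega
  · intro p hp
    simp only [mem_filter, mem_product, mem_range] at hp
    simp only [mem_Icc]
    omega
  · rintro ⟨a, d⟩ hp
    simp only [mem_filter, mem_product, mem_range] at hp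
    simp only [Prod.mk.injEq, true_and]
    omega

open Finset in
theorem ratCatalan_three_formula_general (n : ℕ) (h3 : ¬ (3 ∣ n)) :
    (ratCatalan 3 n =
      ∑ s ∈ Finset.range (n / 3 + 1), ∑ a ∈ Finset.Icc s (n - 2 * s - 1),
        X 0 ^ (n - a - s - 1) * X 1 ^ a) ∧
    ratCatalan 3 n =
      ∑ s ∈ Finset.range (n / 3 + 1),
        ∑ p ∈ (Finset.range n ×ˢ Finset.range n).filter
          (fun p : ℕ × ℕ => s ≤ p.1 ∧ s ≤ p.2 ∧ p.1 + s + p.2 + 1 = n),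
          X 0 ^ p.2 * X 1 ^ p.1 := by
  have hn : 0 < n := Nat.pos_of_ne_zero (by rintro rfl; exact h3 (dvd_zero 3))
  have hsum := (ratCatalan_three_eq_sum_threeColumns h3).trans
    (sum_threeColumns_eq_sum_Icc h3 fun d a => X 0 ^ d * X 1 ^ a)
  exact ⟨hsum, hsum.trans (sum_congr rfl fun s _ =>
    sum_Icc_eq_sum_filter_add_eq hn s fun d a => X 0 ^ d * X 1 ^ a)⟩

open Finset in
/-- For every positive integer `n` not divisible by 3,
`C_{3,n}(q,t) = Σ_{s=0}^{⌊n/3⌋} Σ_{a=s}^{n-2s-1} q^{n-a-s-1} t^a`, and equivalently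
`C_{3,n}(q,t) = Σ_{s=0}^{⌊n/3⌋} Σ_{(a,d) : a ≥ s, d ≥ s, a+s+d+1=n} q^d t^a`. -/
theorem ratCatalan_three_formula (n : ℕ) (hn : 0 < n) (h3 : ¬ (3 ∣ n)) :
    (ratCatalan 3 n =
      ∑ s ∈ Finset.range (n / 3 + 1), ∑ a ∈ Finset.Icc s (n - 2 * s - 1),
        X 0 ^ (n - a - s - 1) * X 1 ^ a) ∧
    ratCatalan 3 n =
      ∑ s ∈ Finset.range (n / 3 + 1),
        ∑ p ∈ (Finset.range n ×ˢ Finset.range n).filter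
          (fun p : ℕ × ℕ => s ≤ p.1 ∧ s ≤ p.2 ∧ p.1 + s + p.2 + 1 = n),
          X 0 ^ p.2 * X 1 ^ p.1 :=
  ratCatalan_three_formula_general n h3
end

section
/- For every positive integer n not divisible by 3, there exists exactly one bijection φ from the set of (3,n)-Dyck paths to itself such that for every (3,n)-Dyck path Π: area(φ(Π)) = dinv(Π), dinv(φ(Π)) = area(Π), and skips(φ(Π)) = skips(Π). -/
open MvPolynomial

namespace Stmt2

variable {n : ℕ}

/-! Basic parameters of a `(3,n)`-Dyck path. -/

def pa (P : DyckPath 3 n) : ℕ := (P.1 0 : ℕ)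
def pb (P : DyckPath 3 n) : ℕ := (P.1 1 : ℕ)

lemma pc2 (P : DyckPath 3 n) : (P.1 2 : ℕ) = 0 := by
  have h := P.2.2 2
  simpa using h

lemma hba (P : DyckPath 3 n) : pb P ≤ pa P := P.2.1 0 1 (by decide)

lemma h3b (P : DyckPath 3 n) : 3 * pb P ≤ n := by
  have h := P.2.2 1
  simpa [pb] using h

lemma h3a (P : DyckPath 3 n) : 3 * pa P ≤ 2 * n := by
  have h := P.2.2 0
  simpa [pa, mul_comm] using h

lemma cval (P : DyckPath 3 n) (i : Fin 3) :
    (P.1 i : ℕ) = if (i : ℕ) = 0 then pa P else if (i : ℕ) = 1 then pb P else 0 := by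
  rcases i with ⟨iv, hi⟩
  interval_cases iv
  · rfl
  · rfl
  · simpa using pc2 P

lemma cval_of0 (P : DyckPath 3 n) {i : Fin 3} (h : (i : ℕ) = 0) :
    (P.1 i : ℕ) = pa P := by rw [cval, if_pos h]

lemma cval_of1 (P : DyckPath 3 n) {i : Fin 3} (h : (i : ℕ) = 1) :
    (P.1 i : ℕ) = pb P := by rw [cval, if_neg (by omega), if_pos h]

lemma cval_of2 (P : DyckPath 3 n) {i : Fin 3} (h : (i : ℕ) = 2) :
    (P.1 i : ℕ) = 0 := by rw [cval, if_neg (by omega), if_neg (by omega)]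

def mkPath (a b : ℕ) (hb : b ≤ a) (h1 : 3 * b ≤ n) (h2 : 3 * a ≤ 2 * n) :
    DyckPath 3 n :=
  ⟨fun i => if (i : ℕ) = 0 then ⟨a, by omega⟩ else if (i : ℕ) = 1 then ⟨b, by omega⟩
    else ⟨0, by omega⟩, by
    constructor
    · intro i j hij
      rcases i with ⟨iv, hi⟩; rcases j with ⟨jv, hj⟩
      have : iv ≤ jv := hij
      interval_cases iv <;> interval_cases jv <;> simp <;> omega
    · intro i
      rcases i with ⟨iv, hi⟩
      interval_cases iv <;> simp <;> omega⟩

lemma mkPath_pa (a b : ℕ) (hb : b ≤ a) (h1 : 3 * b ≤ n) (h2 : 3 * a ≤ 2 * n) :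
    pa (mkPath a b hb h1 h2) = a := rfl

lemma mkPath_pb (a b : ℕ) (hb : b ≤ a) (h1 : 3 * b ≤ n) (h2 : 3 * a ≤ 2 * n) :
    pb (mkPath a b hb h1 h2) = b := rfl

lemma path_ext (P Q : DyckPath 3 n) (h1 : pa P = pa Q) (h2 : pb P = pb Q) : P = Q := by
  apply Subtype.ext
  funext i
  apply Fin.ext
  rw [show ((P.1 i : Fin (n+1)) : ℕ) = _ from cval P i, cval Q i, h1, h2]


/-! Counting helpers. -/

lemma ncard_fin_filter (q : ℕ → Prop) [DecidablePred q] :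
    {j : Fin n | q j.val}.ncard = ((Finset.range n).filter q).card := by
  classical
  have h1 : {j : Fin n | q j.val} = ↑(Finset.univ.filter fun j : Fin n => q j.val) := by
    ext j; simp
  rw [h1, Set.ncard_coe_finset]
  have h2 : ((Finset.univ.filter fun j : Fin n => q j.val).image Fin.val)
      = (Finset.range n).filter q := by
    ext t
    simp only [Finset.mem_image, Finset.mem_filter, Finset.mem_univ, true_and,
      Finset.mem_range]
    constructor
    · rintro ⟨j, hj, rfl⟩; exact ⟨j.isLt, hj⟩
    · rintro ⟨ht, hq⟩; exact ⟨⟨t, ht⟩, hq, rfl⟩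
  rw [← h2, Finset.card_image_of_injective _ Fin.val_injective]

lemma ncard_col (i0 : Fin 3) (q : ℕ → Prop) [DecidablePred q] :
    {x : Fin 3 × Fin n | x.1 = i0 ∧ q x.2.val}.ncard
      = ((Finset.range n).filter q).card := by
  rw [← ncard_fin_filter q]
  have h : {x : Fin 3 × Fin n | x.1 = i0 ∧ q x.2.val}
      = (fun j : Fin n => (i0, j)) '' {j | q j.val} := by
    ext ⟨x1, x2⟩
    simp only [Set.mem_setOf_eq, Set.mem_image, Prod.mk.injEq]
    constructor
    · rintro ⟨rfl, hq⟩; exact ⟨x2, hq, rfl, rfl⟩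
    · rintro ⟨j, hq, rfl, rfl⟩; exact ⟨rfl, hq⟩
  rw [h]
  exact Set.ncard_image_of_injective _ (fun j j' h => by
    simpa using (Prod.ext_iff.mp h).2)

lemma filter_eq_Ico (q : ℕ → Prop) [DecidablePred q] (lo hi : ℕ) (hhi : hi ≤ n)
    (h : ∀ t, t < n → (q t ↔ lo ≤ t ∧ t < hi)) :
    (Finset.range n).filter q = Finset.Ico lo hi := by
  ext t
  simp only [Finset.mem_filter, Finset.mem_range, Finset.mem_Ico]
  constructor
  · rintro ⟨ht, hq⟩; exact (h t ht).1 hq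
  · rintro ⟨h1, h2⟩; exact ⟨lt_of_lt_of_le h2 hhi, (h t (lt_of_lt_of_le h2 hhi)).2 ⟨h1, h2⟩⟩

/-! The area formula. -/

theorem area_eq (P : DyckPath 3 n) (hn3 : ¬ (3 ∣ n)) :
    P.area = n - 1 - pa P - pb P := by
  classical
  have hba := hba P; have h3b := h3b P; have h3a := h3a P
  set a := pa P with hadef
  set b := pb P with hbdef
  have hsplit : {x : Fin 3 × Fin n | n * ((x.1 : ℕ) + 1) ≤ 3 * (x.2 : ℕ)
        ∧ x ∉ P.cellsAbove}
      = {x : Fin 3 × Fin n | x.1 = 0 ∧ (n ≤ 3 * x.2.val ∧ x.2.val < n - a)}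
        ∪ {x : Fin 3 × Fin n | x.1 = 1 ∧ (2 * n ≤ 3 * x.2.val ∧ x.2.val < n - b)} := by
    ext ⟨⟨iv, hi⟩, ⟨jv, hj⟩⟩
    simp only [Set.mem_setOf_eq, Set.mem_union, DyckPath.cellsAbove, cval, Fin.ext_iff,
      Fin.val_zero, Fin.val_one, not_le]
    interval_cases iv <;> simp <;> omega
  rw [DyckPath.area, hsplit, Set.ncard_union_eq ?disj (Set.toFinite _) (Set.toFinite _)]
  case disj =>
    rw [Set.disjoint_left]
    rintro ⟨x1, x2⟩ ⟨h1, -⟩ ⟨h2, -⟩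
    rw [h1] at h2; exact absurd h2 (by decide)
  rw [ncard_col (n := n) 0 (fun t => n ≤ 3 * t ∧ t < n - a),
    ncard_col (n := n) 1 (fun t => 2 * n ≤ 3 * t ∧ t < n - b),
    filter_eq_Ico _ (n / 3 + 1) (n - a) (by omega) (fun t ht => by omega),
    filter_eq_Ico _ (n - n / 3) (n - b) (by omega) (fun t ht => by omega),
    Nat.card_Ico, Nat.card_Ico]
  omega


/-! Arm and leg formulas. -/

lemma mem_cellsAbove (P : DyckPath 3 n) (x : Fin 3 × Fin n) :
    x ∈ P.cellsAbove ↔ n - (P.1 x.1 : ℕ) ≤ (x.2 : ℕ) := Iff.rfl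

lemma leg_eq (P : DyckPath 3 n) (x : Fin 3 × Fin n) :
    P.leg x = (x.2 : ℕ) - (n - (P.1 x.1 : ℕ)) := by
  classical
  rw [DyckPath.leg]
  have h : {y ∈ P.cellsAbove | y.1 = x.1 ∧ y.2 < x.2}
      = {y : Fin 3 × Fin n | y.1 = x.1
          ∧ (n - (P.1 x.1 : ℕ) ≤ y.2.val ∧ y.2.val < x.2.val)} := by
    ext ⟨y1, y2⟩
    simp only [Set.mem_setOf_eq, mem_cellsAbove, Fin.lt_def]
    constructor
    · rintro ⟨hca, rfl, hlt⟩; exact ⟨rfl, hca, hlt⟩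
    · rintro ⟨rfl, hca, hlt⟩; exact ⟨hca, rfl, hlt⟩
  rw [h, ncard_col (n := n) x.1 (fun t => n - (P.1 x.1 : ℕ) ≤ t ∧ t < x.2.val),
    filter_eq_Ico _ (n - (P.1 x.1 : ℕ)) (x.2 : ℕ) (le_of_lt x.2.isLt)
      (fun t ht => Iff.rfl), Nat.card_Ico]

lemma arm_eq0 (P : DyckPath 3 n) (x : Fin 3 × Fin n) (hx : (x.1 : ℕ) = 0) :
    P.arm x = if n - pb P ≤ (x.2 : ℕ) then 1 else 0 := by
  classical
  rw [DyckPath.arm]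
  have h : {y ∈ P.cellsAbove | x.1 < y.1 ∧ y.2 = x.2}
      = {y : Fin 3 × Fin n | y.1 = 1
          ∧ (n - pb P ≤ y.2.val ∧ (x.2 : ℕ) ≤ y.2.val ∧ y.2.val < (x.2 : ℕ) + 1)} := by
    ext y
    have hy2 := y.2.isLt
    have hy : (y.1 : ℕ) = 0 ∨ (y.1 : ℕ) = 1 ∨ (y.1 : ℕ) = 2 := by omega
    simp only [Set.mem_setOf_eq, mem_cellsAbove, Fin.lt_def, hx, Fin.ext_iff,
      Fin.val_one]
    rcases hy with hy | hy | hy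
    · rw [cval_of0 P hy, hy]
      constructor <;> intro h <;> omega
    · rw [cval_of1 P hy, hy]
      constructor <;> intro h <;> omega
    · rw [cval_of2 P hy, hy]
      constructor <;> intro h <;> omega
  rw [h, ncard_col (n := n) 1
      (fun t => n - pb P ≤ t ∧ (x.2 : ℕ) ≤ t ∧ t < (x.2 : ℕ) + 1),
    filter_eq_Ico _ (max (n - pb P) (x.2 : ℕ)) ((x.2 : ℕ) + 1) x.2.isLt
      (fun t ht => by omega), Nat.card_Ico]
  have hx2 := x.2.isLt
  split_ifs with hb <;> omega

lemma arm_eq1 (P : DyckPath 3 n) (x : Fin 3 × Fin n) (hx : (x.1 : ℕ) = 1) :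
    P.arm x = 0 := by
  classical
  rw [DyckPath.arm]
  have h : {y ∈ P.cellsAbove | x.1 < y.1 ∧ y.2 = x.2} = (∅ : Set (Fin 3 × Fin n)) := by
    ext y
    have hy2 := y.2.isLt
    have hy : (y.1 : ℕ) = 0 ∨ (y.1 : ℕ) = 1 ∨ (y.1 : ℕ) = 2 := by omega
    simp only [Set.mem_setOf_eq, mem_cellsAbove, Fin.lt_def, hx,
      Set.mem_empty_iff_false, iff_false, not_and]
    rcases hy with hy | hy | hy
    · rw [cval_of0 P hy, hy]; intro h1 h2; omega
    · rw [cval_of1 P hy, hy]; intro h1 h2; omega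
    · rw [cval_of2 P hy, hy]; intro h1 h2; omega
  rw [h, Set.ncard_empty]

lemma dinvCond_iff (hn : 0 < n) (A L : ℕ) :
    dinvCond 3 n A L ↔ (A * n < 3 * (L + 1) ∧ (L = 0 ∨ 3 * L < (A + 1) * n)) := by
  have hnq : (0 : ℚ) < (n : ℚ) := by exact_mod_cast hn
  have hLq : (0 : ℚ) < (L : ℚ) + 1 := by positivity
  rw [dinvCond, div_lt_div_iff₀ hLq hnq]
  constructor
  · rintro ⟨h1, h2⟩
    refine ⟨by exact_mod_cast h1, ?_⟩
    rcases Nat.eq_zero_or_pos L with hL | hL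
    · exact Or.inl hL
    · rcases h2 with h2 | h2
      · exact Or.inl h2
      · have hLq' : (0 : ℚ) < (L : ℚ) := by exact_mod_cast hL
        rw [div_lt_div_iff₀ hnq hLq'] at h2
        exact Or.inr (by exact_mod_cast h2)
  · rintro ⟨h1, h2⟩
    refine ⟨by exact_mod_cast h1, ?_⟩
    rcases Nat.eq_zero_or_pos L with hL | hL
    · exact Or.inl hL
    · rcases h2 with h2 | h2
      · exact Or.inl h2
      · have hLq' : (0 : ℚ) < (L : ℚ) := by exact_mod_cast hL
        rw [div_lt_div_iff₀ hnq hLq']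
        exact Or.inr (by exact_mod_cast h2)

/-! The dinv formula. -/

theorem dinv_eq (P : DyckPath 3 n) (hn : 0 < n) (hn3 : ¬ (3 ∣ n)) :
    P.dinv = min (pa P - pb P) (n / 3 + 1) + min (pb P) (pa P - n / 3) + pb P := by
  classical
  have hba := hba P; have h3b := h3b P; have h3a := h3a P
  set a := pa P with hadef
  set b := pb P with hbdef
  have hsplit : {x ∈ P.cellsAbove | dinvCond 3 n (P.arm x) (P.leg x)}
      = ({x : Fin 3 × Fin n | x.1 = 0 ∧ (n - a ≤ x.2.val ∧ x.2.val < n - b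
            ∧ (x.2.val - (n - a) = 0 ∨ 3 * (x.2.val - (n - a)) < n))}
        ∪ {x : Fin 3 × Fin n | x.1 = 0 ∧ (n - b ≤ x.2.val
            ∧ n < 3 * (x.2.val - (n - a)) + 3
            ∧ (x.2.val - (n - a) = 0 ∨ 3 * (x.2.val - (n - a)) < n * 2))})
        ∪ {x : Fin 3 × Fin n | x.1 = 1 ∧ (n - b ≤ x.2.val
            ∧ (x.2.val - (n - b) = 0 ∨ 3 * (x.2.val - (n - b)) < n))} := by
    ext y
    have hy2 := y.2.isLt
    have hy : (y.1 : ℕ) = 0 ∨ (y.1 : ℕ) = 1 ∨ (y.1 : ℕ) = 2 := by omega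
    simp only [Set.mem_setOf_eq, Set.mem_union, Fin.ext_iff, Fin.val_zero, Fin.val_one]
    constructor
    · rintro ⟨hca, hdc⟩
      rw [mem_cellsAbove] at hca
      rw [dinvCond_iff hn, leg_eq] at hdc
      rcases hy with hy | hy | hy
      · rw [arm_eq0 P _ hy] at hdc
        rw [cval_of0 P hy] at hca hdc
        by_cases hb2 : n - b ≤ (y.2 : ℕ)
        · rw [if_pos hb2] at hdc
          exact Or.inl (Or.inr ⟨hy, hb2, by omega, by omega⟩)
        · rw [if_neg hb2] at hdc
          exact Or.inl (Or.inl ⟨hy, by omega, by omega, by omega⟩)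
      · rw [arm_eq1 P _ hy] at hdc
        rw [cval_of1 P hy] at hca hdc
        exact Or.inr ⟨hy, by omega, by omega⟩
      · rw [cval_of2 P hy] at hca
        omega
    · intro h
      rcases h with (⟨h1, h2⟩ | ⟨h1, h2⟩) | ⟨h1, h2⟩
      · refine ⟨?_, ?_⟩
        · rw [mem_cellsAbove, cval_of0 P h1]; omega
        · rw [dinvCond_iff hn, leg_eq, arm_eq0 P _ h1, cval_of0 P h1]
          rw [if_neg (by omega)]
          exact ⟨by omega, by omega⟩
      · refine ⟨?_, ?_⟩
        · rw [mem_cellsAbove, cval_of0 P h1]; omega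
        · rw [dinvCond_iff hn, leg_eq, arm_eq0 P _ h1, cval_of0 P h1]
          rw [if_pos (by omega)]
          exact ⟨by omega, by omega⟩
      · refine ⟨?_, ?_⟩
        · rw [mem_cellsAbove, cval_of1 P h1]; omega
        · rw [dinvCond_iff hn, leg_eq, arm_eq1 P _ h1, cval_of1 P h1]
          exact ⟨by omega, by omega⟩
  rw [DyckPath.dinv, hsplit]
  rw [Set.ncard_union_eq ?d1 ((Set.toFinite _).union (Set.toFinite _)) (Set.toFinite _),
    Set.ncard_union_eq ?d2 (Set.toFinite _) (Set.toFinite _)]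
  case d1 =>
    rw [Set.disjoint_left]
    rintro x (⟨h1, -⟩ | ⟨h1, -⟩) ⟨h2, -⟩ <;> (rw [h1] at h2; exact absurd h2 (by decide))
  case d2 =>
    rw [Set.disjoint_left]
    rintro x ⟨h1, -, hlt, -⟩ ⟨h2, hge, -⟩
    omega
  rw [ncard_col (n := n) 0 (fun t => n - a ≤ t ∧ t < n - b
      ∧ (t - (n - a) = 0 ∨ 3 * (t - (n - a)) < n)),
    ncard_col (n := n) 0 (fun t => n - b ≤ t ∧ n < 3 * (t - (n - a)) + 3
      ∧ (t - (n - a) = 0 ∨ 3 * (t - (n - a)) < n * 2)),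
    ncard_col (n := n) 1 (fun t => n - b ≤ t ∧ (t - (n - b) = 0 ∨ 3 * (t - (n - b)) < n)),
    filter_eq_Ico _ (n - a) (min (n - b) (n - a + n / 3 + 1)) (by omega)
      (fun t ht => by omega),
    filter_eq_Ico _ (max (n - b) (n - a + n / 3)) n (by omega) (fun t ht => by omega),
    filter_eq_Ico _ (n - b) n (by omega) (fun t ht => by omega),
    Nat.card_Ico, Nat.card_Ico, Nat.card_Ico]
  omega


/-! Rank characterizations. -/

lemma mem_posRank (hn : 0 < n) (r : ℤ) :
    r ∈ posRank n ↔ 0 < r ∧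
      ((3 ∣ r + n ∧ r ≤ 2 * n - 3) ∨ (3 ∣ r + 2 * n ∧ r ≤ n - 3)) := by
  constructor
  · rintro ⟨hr, ⟨x, hx⟩⟩
    refine ⟨hr, ?_⟩
    rw [cellRank] at hx
    have hx' : 3 * ((x.2 : ℕ) : ℤ) - (((x.1 : ℕ) : ℤ) + 1) * (n : ℤ) = r := hx
    have hj : (x.2 : ℕ) < n := x.2.isLt
    have hy : (x.1 : ℕ) = 0 ∨ (x.1 : ℕ) = 1 ∨ (x.1 : ℕ) = 2 := by omega
    rcases hy with hy | hy | hy <;> rw [hy] at hx' <;> omega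
  · rintro ⟨hr, h | h⟩
    · obtain ⟨m, hm⟩ := h.1
      have hm0 : 0 ≤ m := by omega
      have hjv : ((m.toNat : ℕ) : ℤ) = m := Int.toNat_of_nonneg hm0
      refine ⟨hr, ⟨(⟨0, by omega⟩, ⟨m.toNat, by omega⟩), ?_⟩⟩
      show 3 * ((m.toNat : ℕ) : ℤ) - (((0 : ℕ) : ℤ) + 1) * (n : ℤ) = r
      omega
    · obtain ⟨m, hm⟩ := h.1
      have hm0 : 0 ≤ m := by omega
      have hjv : ((m.toNat : ℕ) : ℤ) = m := Int.toNat_of_nonneg hm0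
      refine ⟨hr, ⟨(⟨1, by omega⟩, ⟨m.toNat, by omega⟩), ?_⟩⟩
      show 3 * ((m.toNat : ℕ) : ℤ) - (((1 : ℕ) : ℤ) + 1) * (n : ℤ) = r
      omega

lemma mem_marked (P : DyckPath 3 n) (hn : 0 < n) (r : ℤ) :
    r ∈ markedRank P ↔
      ((3 ∣ r + n ∧ 2 * n - 3 * pa P ≤ r ∧ r ≤ 2 * n - 3)
        ∨ (3 ∣ r + 2 * n ∧ n - 3 * pb P ≤ r ∧ r ≤ n - 3)) := by
  have hba := hba P; have h3b := h3b P; have h3a := h3a P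
  constructor
  · rintro ⟨x, hca, hx⟩
    rw [mem_cellsAbove] at hca
    rw [cellRank] at hx
    have hx' : 3 * ((x.2 : ℕ) : ℤ) - (((x.1 : ℕ) : ℤ) + 1) * (n : ℤ) = r := hx
    have hj : (x.2 : ℕ) < n := x.2.isLt
    have hy : (x.1 : ℕ) = 0 ∨ (x.1 : ℕ) = 1 ∨ (x.1 : ℕ) = 2 := by omega
    rcases hy with hy | hy | hy
    · rw [cval_of0 P hy] at hca
      rw [hy] at hx'
      left; omega
    · rw [cval_of1 P hy] at hca
      rw [hy] at hx'
      right; omega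
    · rw [cval_of2 P hy] at hca
      rw [hy] at hx'
      omega
  · rintro (h | h)
    · obtain ⟨m, hm⟩ := h.1
      have hjv : ((m.toNat : ℕ) : ℤ) = m := Int.toNat_of_nonneg (by omega)
      refine ⟨(⟨0, by omega⟩, ⟨m.toNat, by omega⟩), ?_, ?_⟩
      · rw [mem_cellsAbove, cval_of0 P rfl]
        show n - pa P ≤ m.toNat
        omega
      · rw [cellRank]
        show 3 * ((m.toNat : ℕ) : ℤ) - (((0 : ℕ) : ℤ) + 1) * (n : ℤ) = r
        omega
    · obtain ⟨m, hm⟩ := h.1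
      have hjv : ((m.toNat : ℕ) : ℤ) = m := Int.toNat_of_nonneg (by omega)
      refine ⟨(⟨1, by omega⟩, ⟨m.toNat, by omega⟩), ?_, ?_⟩
      · rw [mem_cellsAbove, cval_of1 P rfl]
        show n - pb P ≤ m.toNat
        omega
      · rw [cellRank]
        show 3 * ((m.toNat : ℕ) : ℤ) - (((1 : ℕ) : ℤ) + 1) * (n : ℤ) = r
        omega

/-! The skips formula. -/
set_option maxHeartbeats 1000000 in

theorem skips_eq (P : DyckPath 3 n) (hn : 0 < n) (hn3 : ¬ (3 ∣ n)) :
    P.skips = (pb P - (pa P - n / 3)) + ((pa P - n / 3) - pb P - 1) := by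
  classical
  have hba := hba P; have h3b := h3b P; have h3a := h3a P
  set a := pa P with hadef
  set b := pb P with hbdef
  set k := n / 3 with hkdef
  have hinj3 : Function.Injective (fun s : ℤ => 2 * (n : ℤ) - 3 * s) := by
    intro s t h; dsimp at h; omega
  have hinj3' : Function.Injective (fun t : ℤ => (n : ℤ) - 3 * t) := by
    intro s t h; dsimp at h; omega
  rw [DyckPath.skips]
  by_cases hak : a ≤ k
  · by_cases hb0 : b = 0
    · -- no skips
      have hset : {r : ℤ | r ∈ posRank n ∧ r ∉ markedRank P ∧
          (∃ l ∈ markedRank P, l < r) ∧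
          ∃ s ∈ markedRank P, r < s ∧ ∀ t ∈ posRank n, r < t → s ≤ t} = ∅ := by
        ext r
        simp only [Set.mem_setOf_eq, Set.mem_empty_iff_false, iff_false, not_and]
        intro hpos hunm ⟨l, hl, hlr⟩ ⟨s, hs, hrs, hmin⟩
        rw [mem_posRank hn] at hpos
        rw [mem_marked P hn] at hunm hl hs
        omega
      rw [hset, Set.ncard_empty]
      omega
    · -- a ≤ k, b ≥ 1 : skips = b
      have hset : {r : ℤ | r ∈ posRank n ∧ r ∉ markedRank P ∧
          (∃ l ∈ markedRank P, l < r) ∧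
          ∃ s ∈ markedRank P, r < s ∧ ∀ t ∈ posRank n, r < t → s ≤ t}
          = ↑(insert (2 * (n : ℤ) - 3 * ((a : ℤ) + 1))
              ((Finset.Icc ((k : ℤ) + 2) ((k : ℤ) + (b : ℤ))).image
                (fun s : ℤ => 2 * (n : ℤ) - 3 * s))) := by
        ext r
        simp only [Set.mem_setOf_eq, Finset.coe_insert, Set.mem_insert_iff,
          Finset.coe_image, Set.mem_image, Finset.mem_coe, Finset.mem_Icc]
        constructor
        · rintro ⟨hpos, hunm, ⟨l, hl, hlr⟩, ⟨s, hs, hrs, hmin⟩⟩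
          rw [mem_posRank hn] at hpos
          rw [mem_marked P hn] at hunm hl hs
          obtain ⟨hr0, hcls⟩ := hpos
          rcases hcls with hcls | hcls
          · by_cases hlow : r + 3 - ((n : ℤ) - 3 * (k : ℤ)) ≤ (n : ℤ) - 3
            · have hsucc := hmin (r + 3 - ((n : ℤ) - 3 * (k : ℤ)))
                ((mem_posRank hn _).mpr (by omega)) (by omega)
              by_cases hc : r = 2 * (n : ℤ) - 3 * ((a : ℤ) + 1)
              · exact Or.inl hc
              · exact Or.inr ⟨(2 * (n : ℤ) - r) / 3, by omega, by omega⟩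
            · have hsucc := hmin (r + 3) ((mem_posRank hn _).mpr (by omega)) (by omega)
              by_cases hc : r = 2 * (n : ℤ) - 3 * ((a : ℤ) + 1)
              · exact Or.inl hc
              · exact Or.inr ⟨(2 * (n : ℤ) - r) / 3, by omega, by omega⟩
          · have hsucc := hmin (r + ((n : ℤ) - 3 * (k : ℤ)))
              ((mem_posRank hn _).mpr (by omega)) (by omega)
            by_cases hc : r = 2 * (n : ℤ) - 3 * ((a : ℤ) + 1)
            · exact Or.inl hc
            · exact Or.inr ⟨(2 * (n : ℤ) - r) / 3, by omega, by omega⟩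
        · rintro (rfl | ⟨s, hs, rfl⟩)
          · refine ⟨(mem_posRank hn _).mpr (by omega), ?_, ?_, ?_⟩
            · rw [mem_marked P hn]; omega
            · exact ⟨(n : ℤ) - 3 * b, (mem_marked P hn _).mpr (by omega), by omega⟩
            · refine ⟨2 * (n : ℤ) - 3 * (a : ℤ), (mem_marked P hn _).mpr (by omega),
                by omega, ?_⟩
              intro t ht hrt
              rw [mem_posRank hn] at ht
              omega
          · refine ⟨(mem_posRank hn _).mpr (by omega), ?_, ?_, ?_⟩
            · rw [mem_marked P hn]; omega
            · exact ⟨(n : ℤ) - 3 * b, (mem_marked P hn _).mpr (by omega), by omega⟩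
            · refine ⟨(n : ℤ) - 3 * (s - (k : ℤ) - 1),
                (mem_marked P hn _).mpr (by omega), by omega, ?_⟩
              intro t ht hrt
              rw [mem_posRank hn] at ht
              omega
      rw [hset, Set.ncard_coe_finset,
        Finset.card_insert_of_notMem (by
          simp only [Finset.mem_image, Finset.mem_Icc]
          rintro ⟨s, hs, hsv⟩
          omega),
        Finset.card_image_of_injective _ hinj3, Int.card_Icc]
      omega
  · by_cases hub : a - k ≤ b
    · -- k < a ≤ k + b : skips = b - (a - k)
      have hset : {r : ℤ | r ∈ posRank n ∧ r ∉ markedRank P ∧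
          (∃ l ∈ markedRank P, l < r) ∧
          ∃ s ∈ markedRank P, r < s ∧ ∀ t ∈ posRank n, r < t → s ≤ t}
          = ↑((Finset.Icc ((a : ℤ) + 1) ((k : ℤ) + (b : ℤ))).image
              (fun s : ℤ => 2 * (n : ℤ) - 3 * s)) := by
        ext r
        simp only [Set.mem_setOf_eq, Finset.coe_image, Set.mem_image, Finset.mem_coe,
          Finset.mem_Icc]
        constructor
        · rintro ⟨hpos, hunm, ⟨l, hl, hlr⟩, ⟨s, hs, hrs, hmin⟩⟩
          rw [mem_posRank hn] at hpos
          rw [mem_marked P hn] at hunm hl hs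
          obtain ⟨hr0, hcls⟩ := hpos
          rcases hcls with hcls | hcls
          · by_cases hlow : r + 3 - ((n : ℤ) - 3 * (k : ℤ)) ≤ (n : ℤ) - 3
            · have hsucc := hmin (r + 3 - ((n : ℤ) - 3 * (k : ℤ)))
                ((mem_posRank hn _).mpr (by omega)) (by omega)
              exact ⟨(2 * (n : ℤ) - r) / 3, by omega, by omega⟩
            · have hsucc := hmin (r + 3) ((mem_posRank hn _).mpr (by omega)) (by omega)
              exact ⟨(2 * (n : ℤ) - r) / 3, by omega, by omega⟩
          · have hsucc := hmin (r + ((n : ℤ) - 3 * (k : ℤ)))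
              ((mem_posRank hn _).mpr (by omega)) (by omega)
            exact ⟨(2 * (n : ℤ) - r) / 3, by omega, by omega⟩
        · rintro ⟨s, hs, rfl⟩
          refine ⟨(mem_posRank hn _).mpr (by omega), ?_, ?_, ?_⟩
          · rw [mem_marked P hn]; omega
          · exact ⟨(n : ℤ) - 3 * b, (mem_marked P hn _).mpr (by omega), by omega⟩
          · refine ⟨(n : ℤ) - 3 * (s - (k : ℤ) - 1),
              (mem_marked P hn _).mpr (by omega), by omega, ?_⟩
            intro t ht hrt
            rw [mem_posRank hn] at ht
            omega
      rw [hset, Set.ncard_coe_finset, Finset.card_image_of_injective _ hinj3,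
        Int.card_Icc]
      omega
    · -- a - k > b : skips = a - k - b - 1
      have hset : {r : ℤ | r ∈ posRank n ∧ r ∉ markedRank P ∧
          (∃ l ∈ markedRank P, l < r) ∧
          ∃ s ∈ markedRank P, r < s ∧ ∀ t ∈ posRank n, r < t → s ≤ t}
          = ↑((Finset.Icc ((b : ℤ) + 1) ((a : ℤ) - (k : ℤ) - 1)).image
              (fun t : ℤ => (n : ℤ) - 3 * t)) := by
        ext r
        simp only [Set.mem_setOf_eq, Finset.coe_image, Set.mem_image, Finset.mem_coe,
          Finset.mem_Icc]
        constructor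
        · rintro ⟨hpos, hunm, ⟨l, hl, hlr⟩, ⟨s, hs, hrs, hmin⟩⟩
          rw [mem_posRank hn] at hpos
          rw [mem_marked P hn] at hunm hl hs
          obtain ⟨hr0, hcls⟩ := hpos
          rcases hcls with hcls | hcls
          · by_cases hlow : r + 3 - ((n : ℤ) - 3 * (k : ℤ)) ≤ (n : ℤ) - 3
            · have hsucc := hmin (r + 3 - ((n : ℤ) - 3 * (k : ℤ)))
                ((mem_posRank hn _).mpr (by omega)) (by omega)
              exact ⟨((n : ℤ) - r) / 3, by omega, by omega⟩
            · have hsucc := hmin (r + 3) ((mem_posRank hn _).mpr (by omega)) (by omega)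
              exact ⟨((n : ℤ) - r) / 3, by omega, by omega⟩
          · have hsucc := hmin (r + ((n : ℤ) - 3 * (k : ℤ)))
              ((mem_posRank hn _).mpr (by omega)) (by omega)
            exact ⟨((n : ℤ) - r) / 3, by omega, by omega⟩
        · rintro ⟨t, ht, rfl⟩
          refine ⟨(mem_posRank hn _).mpr (by omega), ?_, ?_, ?_⟩
          · rw [mem_marked P hn]; omega
          · exact ⟨2 * (n : ℤ) - 3 * a, (mem_marked P hn _).mpr (by omega), by omega⟩
          · refine ⟨2 * (n : ℤ) - 3 * ((k : ℤ) + t),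
              (mem_marked P hn _).mpr (by omega), by omega, ?_⟩
            intro t' ht' hrt'
            rw [mem_posRank hn] at ht'
            omega
      rw [hset, Set.ncard_coe_finset, Finset.card_image_of_injective _ hinj3',
        Int.card_Icc]
      omega


/-! Arithmetic consequences. -/

lemma stats_inj (hn : 0 < n) (h3 : ¬ (3 ∣ n)) (P Q : DyckPath 3 n)
    (h1 : P.area = Q.area) (h2 : P.dinv = Q.dinv) : P = Q := by
  rw [area_eq P h3, area_eq Q h3] at h1
  rw [dinv_eq P hn h3, dinv_eq Q hn h3] at h2
  have hP1 := hba P; have hP2 := h3b P; have hP3 := h3a P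
  have hQ1 := hba Q; have hQ2 := h3b Q; have hQ3 := h3a Q
  exact path_ext P Q (by omega) (by omega)

set_option maxHeartbeats 1000000 in
lemma partner (hn : 0 < n) (h3 : ¬ (3 ∣ n)) (P : DyckPath 3 n) :
    ∃ Q : DyckPath 3 n, Q.area = P.dinv ∧ Q.dinv = P.area := by
  have hP1 := hba P; have hP2 := h3b P; have hP3 := h3a P
  obtain ⟨a', b', hb, h1, h2, harea, hdinv⟩ :
      ∃ a' b', b' ≤ a' ∧ 3 * b' ≤ n ∧ 3 * a' ≤ 2 * n ∧
        n - 1 - a' - b'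
          = min (pa P - pb P) (n / 3 + 1) + min (pb P) (pa P - n / 3) + pb P ∧
        min (a' - b') (n / 3 + 1) + min b' (a' - n / 3) + b'
          = n - 1 - pa P - pb P := by
    set a := pa P with hadef
    set b := pb P with hbdef
    set A1 := min (a - b) (n / 3 + 1) + min b (a - n / 3) + b with hA1
    set D1 := n - 1 - a - b with hD1
    by_cases hD : D1 ≤ n / 3
    · refine ⟨D1, n - 1 - A1 - D1, by omega, by omega, by omega, by omega, by omega⟩
    · obtain ⟨m, hm⟩ : ∃ m, D1 - n / 3 = 2 * m ∨ D1 - n / 3 = 2 * m + 1 :=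
        ⟨(D1 - n / 3) / 2, by omega⟩
      rcases hm with hm | hm
      · refine ⟨n / 3 + m, n - 1 - A1 - (n / 3 + m),
          by omega, by omega, by omega, by omega, by omega⟩
      · refine ⟨n - 1 - A1 - m, m,
          by omega, by omega, by omega, by omega, by omega⟩
  refine ⟨mkPath a' b' hb h1 h2, ?_, ?_⟩
  · rw [area_eq _ h3, mkPath_pa, mkPath_pb, dinv_eq P hn h3]
    exact harea
  · rw [dinv_eq _ hn h3, mkPath_pa, mkPath_pb, area_eq P h3]
    exact hdinv

lemma sum_rel (hn : 0 < n) (h3 : ¬ (3 ∣ n)) (P : DyckPath 3 n) :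
    P.area + P.dinv + P.skips = n - 1 := by
  have hP1 := hba P; have hP2 := h3b P; have hP3 := h3a P
  rw [area_eq P h3, dinv_eq P hn h3, skips_eq P hn h3]
  omega

end Stmt2

/-- For every positive integer `n` not divisible by 3, there is exactly
one bijection `φ` of the set of `(3,n)`-Dyck paths onto itself with
`area(φ Π) = dinv Π`, `dinv(φ Π) = area Π` and `skips(φ Π) = skips Π` for all `Π`. -/
theorem existsUnique_bijection_exchanging_area_dinv (n : ℕ) (hn : 0 < n)
    (h3 : ¬ (3 ∣ n)) :
    ∃! φ : DyckPath 3 n → DyckPath 3 n,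
      Function.Bijective φ ∧
        ∀ P : DyckPath 3 n,
          (φ P).area = P.dinv ∧ (φ P).dinv = P.area ∧ (φ P).skips = P.skips := by
  classical
  have key : ∀ P Q : DyckPath 3 n, P.area = Q.area → P.dinv = Q.dinv → P = Q :=
    Stmt2.stats_inj hn h3
  have hrel : ∀ P : DyckPath 3 n, P.area + P.dinv + P.skips = n - 1 :=
    Stmt2.sum_rel hn h3
  choose φ hφ1 hφ2 using Stmt2.partner hn h3
  have hinj : Function.Injective φ := by
    intro P Q h
    apply key
    · rw [← hφ2 P, ← hφ2 Q, h]
    · rw [← hφ1 P, ← hφ1 Q, h]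
  refine ⟨φ, ⟨⟨hinj, Finite.surjective_of_injective hinj⟩, fun P => ⟨hφ1 P, hφ2 P, ?_⟩⟩, ?_⟩
  · have h1 := hrel (φ P)
    have h2 := hrel P
    have h3 := hφ1 P
    have h4 := hφ2 P
    have h5 : 0 < Fintype.card (DyckPath 3 n) := Fintype.card_pos_iff.mpr ⟨φ P⟩
    omega
  · intro ψ ⟨hψb, hψ⟩
    funext P
    exact key (ψ P) (φ P) (by rw [(hψ P).1, hφ1 P]) (by rw [(hψ P).2.1, hφ2 P])
end

section
/- Let n be a positive integer not divisible by 3 and let Π be a (3,n)-Dyck path. Every cell x ∈ λ(Π) lying in the second column of the lattice satisfies arm(x)/(leg(x)+1) < 3/n < (arm(x)+1)/leg(x), and hence contributes to dinv(Π). -/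
open MvPolynomial

/-!
The diagonal condition forces the last column of a `(3,n)`-Dyck path to be empty, so a cell of
the second column has arm `0`, and it bounds the second column by `n/3` cells, so its leg `l`
satisfies `3l < n`. For arm `0` the dinv condition `0 < 3/n < 1/l` is exactly `3l < n`.
-/

namespace DyckPath

variable {m n : ℕ}

theorem height_eq_zero_of_last (P : DyckPath m n) (i : Fin m) (hi : (i : ℕ) + 1 = m) :
    (P.1 i : ℕ) = 0 := by
  have h := P.2.2 i
  rw [show m - 1 - (i : ℕ) = 0 by omega, mul_zero] at h
  have := i.isLt
  exact (Nat.mul_eq_zero.mp (Nat.le_zero.mp h)).resolve_left (by omega)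

theorem notMem_cellsAbove_of_height_eq_zero (P : DyckPath m n) {x : Fin m × Fin n}
    (h : (P.1 x.1 : ℕ) = 0) : x ∉ P.cellsAbove := by
  intro hx
  have : n - (P.1 x.1 : ℕ) ≤ x.2 := hx
  have := x.2.isLt
  omega

theorem arm_eq_zero_of_add_two_eq (P : DyckPath m n) {x : Fin m × Fin n}
    (hx : (x.1 : ℕ) + 2 = m) : P.arm x = 0 := by
  rw [arm, Set.ncard_eq_zero]
  refine Set.eq_empty_of_forall_notMem fun y ⟨hy, hxy, _⟩ => ?_
  have hlast : (y.1 : ℕ) + 1 = m := by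
    have := y.1.isLt
    rw [← Fin.val_fin_lt] at hxy
    omega
  exact P.notMem_cellsAbove_of_height_eq_zero (P.height_eq_zero_of_last y.1 hlast) hy

/-- The row map sends the cells counted by `leg x` injectively into the rows
`n - P.1 x.1, …, x.2 - 1`, of which there are fewer than `P.1 x.1`. -/
theorem leg_lt_height (P : DyckPath m n) {x : Fin m × Fin n} (hx : x ∈ P.cellsAbove) :
    P.leg x < P.1 x.1 := by
  have hrows : P.leg x ≤ (Set.Ico (n - (P.1 x.1 : ℕ)) x.2).ncard := by
    refine Set.ncard_le_ncard_of_injOn (fun y => (y.2 : ℕ)) ?_ ?_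
    · rintro y ⟨hy, hcol, hrow⟩
      exact ⟨hcol ▸ hy, hrow⟩
    · rintro y ⟨-, hy, -⟩ z ⟨-, hz, -⟩ hyz
      exact Prod.ext (hy.trans hz.symm) (Fin.ext hyz)
  rw [← Finset.coe_Ico, Set.ncard_coe_finset, Nat.card_Ico] at hrows
  have : n - (P.1 x.1 : ℕ) ≤ x.2 := hx
  have := x.2.isLt
  omega

end DyckPath

theorem dinvCond_zero_of_mul_lt {m n l : ℕ} (hm : 0 < m) (hn : 0 < n) (h : m * l < n) :
    dinvCond m n 0 l := by
  have hn' : (0 : ℚ) < n := by exact_mod_cast hn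
  refine ⟨by simp only [Nat.cast_zero, zero_div]; positivity, ?_⟩
  rcases Nat.eq_zero_or_pos l with hl | hl
  · exact Or.inl hl
  · right
    rw [Nat.cast_zero, zero_add, div_lt_div_iff₀ hn' (by exact_mod_cast hl)]
    exact_mod_cast (by omega : m * l < 1 * n)

theorem secondColumn_dinvCond_general (n : ℕ) (P : DyckPath 3 n)
    (x : Fin 3 × Fin n) (hx : x ∈ P.cellsAbove) (hcol : x.1 = 1) :
    dinvCond 3 n (P.arm x) (P.leg x) := by
  have hleg : 3 * P.leg x < n := by
    have hdiag : 3 * (P.1 x.1 : ℕ) ≤ n := by simpa [hcol] using P.2.2 x.1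
    have := P.leg_lt_height hx
    omega
  rw [P.arm_eq_zero_of_add_two_eq (by simp [hcol])]
  exact dinvCond_zero_of_mul_lt three_pos x.2.pos hleg

/-- Every cell of `λ(Π)` in the second column of the lattice satisfies
the dinv inequality `arm(x)/(leg(x)+1) < 3/n < (arm(x)+1)/leg(x)`. -/
theorem secondColumn_dinvCond (n : ℕ) (hn : 0 < n) (h3 : ¬ (3 ∣ n)) (P : DyckPath 3 n)
    (x : Fin 3 × Fin n) (hx : x ∈ P.cellsAbove) (hcol : x.1 = 1) :
    dinvCond 3 n (P.arm x) (P.leg x) :=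
  secondColumn_dinvCond_general n P x hx hcol
end

section
/- Let n be a positive integer not divisible by 3 and let Π be a (3,n)-Dyck path. If a cell x ∈ λ(Π) lies in the first column of the lattice and does NOT satisfy arm(x)/(leg(x)+1) < 3/n < (arm(x)+1)/leg(x), then either (arm(x) = 1 and leg(x) < n/3 − 1) or (arm(x) = 0 and leg(x) > n/3). -/
open MvPolynomial

/-- If a cell of `λ(Π)` in the first column of the lattice fails the
dinv inequality, then either `arm(x) = 1` and `leg(x) < n/3 − 1`, or `arm(x) = 0` and
`leg(x) > n/3`. -/
theorem firstColumn_not_dinvCond_classification (n : ℕ) (hn : 0 < n) (h3 : ¬ (3 ∣ n))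
    (P : DyckPath 3 n) (x : Fin 3 × Fin n) (hx : x ∈ P.cellsAbove) (hcol : x.1 = 0)
    (hnd : ¬ dinvCond 3 n (P.arm x) (P.leg x)) :
    (P.arm x = 1 ∧ (P.leg x : ℚ) < (n : ℚ) / 3 - 1) ∨
      (P.arm x = 0 ∧ (n : ℚ) / 3 < (P.leg x : ℚ)) := by
  have hnQ : (0 : ℚ) < (n : ℚ) := by exact_mod_cast hn
  -- column 2 has no cells above the path
  have hc2 : (P.1 2 : ℕ) = 0 := by
    have := P.2.2 2
    simpa using this
  -- arm is at most 1
  have harm : P.arm x ≤ 1 := by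
    have hsub : {y ∈ P.cellsAbove | x.1 < y.1 ∧ y.2 = x.2} ⊆ {((1 : Fin 3), x.2)} := by
      rintro ⟨i, j⟩ ⟨hab, hlt, heq⟩
      simp only [Set.mem_singleton_iff, Prod.mk.injEq]
      refine ⟨?_, heq⟩
      have h0 : (0 : ℕ) < (i : ℕ) := by
        have := hlt
        rw [hcol] at this
        exact_mod_cast this
      have hi3 : (i : ℕ) < 3 := i.isLt
      have hne2 : (i : ℕ) ≠ 2 := by
        intro h2
        have hi2 : i = (2 : Fin 3) := Fin.ext (by simpa using h2)
        subst hi2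
        have hab' : n - (P.1 2 : ℕ) ≤ (j : ℕ) := hab
        rw [hc2] at hab'
        exact absurd hab' (by omega)
      exact Fin.ext (by omega)
    calc P.arm x ≤ ({((1 : Fin 3), x.2)} : Set (Fin 3 × Fin n)).ncard :=
          Set.ncard_le_ncard hsub (Set.finite_singleton _)
      _ = 1 := Set.ncard_singleton _
  -- leg bound
  have hx0 : n - (P.1 0 : ℕ) ≤ (x.2 : ℕ) := by
    have := hx
    simp only [DyckPath.cellsAbove, Set.mem_setOf_eq, hcol] at this
    exact this
  have hleg : P.leg x ≤ (x.2 : ℕ) - (n - (P.1 0 : ℕ)) := by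
    set S : Set (Fin 3 × Fin n) := {y ∈ P.cellsAbove | y.1 = x.1 ∧ y.2 < x.2} with hS
    have hinj : Set.InjOn (fun y : Fin 3 × Fin n => (y.2 : ℕ)) S := by
      rintro ⟨i1, j1⟩ ⟨h1, hi1, _⟩ ⟨i2, j2⟩ ⟨h2, hi2, _⟩ hj
      simp only at hj hi1 hi2
      exact Prod.ext (hi1.trans hi2.symm) (Fin.ext hj)
    have himg : (fun y : Fin 3 × Fin n => (y.2 : ℕ)) '' S ⊆
        Set.Ico (n - (P.1 0 : ℕ)) (x.2 : ℕ) := by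
      rintro k ⟨⟨i, j⟩, ⟨hab, hi, hj⟩, rfl⟩
      simp only at hi hj
      have hab' : n - (P.1 i : ℕ) ≤ (j : ℕ) := hab
      rw [hi, hcol] at hab'
      exact ⟨hab', by exact_mod_cast hj⟩
    calc P.leg x = ((fun y : Fin 3 × Fin n => (y.2 : ℕ)) '' S).ncard :=
          (Set.ncard_image_of_injOn hinj).symm
      _ ≤ (Set.Ico (n - (P.1 0 : ℕ)) (x.2 : ℕ)).ncard := by
          apply Set.ncard_le_ncard himg
            (by rw [← Finset.coe_Ico]; exact (Finset.Ico _ _).finite_toSet)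
      _ = (x.2 : ℕ) - (n - (P.1 0 : ℕ)) := by
          rw [← Finset.coe_Ico, Set.ncard_coe_finset, Nat.card_Ico]
  have hdiag0 : 3 * (P.1 0 : ℕ) ≤ n * 2 := by
    have := P.2.2 0
    simpa using this
  set a := P.arm x with ha
  set l := P.leg x with hl
  rw [dinvCond] at hnd
  push_neg at hnd
  interval_cases a
  · -- arm = 0
    have hA : ((0 : ℕ) : ℚ) / ((l : ℚ) + 1) < (3 : ℚ) / (n : ℚ) := by
      rw [Nat.cast_zero, zero_div]
      positivity
    obtain ⟨hl0, hB⟩ := hnd hA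
    have hlQ : (0 : ℚ) < (l : ℚ) := by
      have : 0 < l := Nat.pos_of_ne_zero hl0
      exact_mod_cast this
    rw [div_le_div_iff₀ hlQ hnQ] at hB
    norm_num at hB
    have hnl : n ≤ 3 * l := by exact_mod_cast hB
    have hne : n ≠ 3 * l := fun h => h3 ⟨l, h⟩
    have hlt : n < 3 * l := lt_of_le_of_ne hnl hne
    right
    refine ⟨rfl, ?_⟩
    rw [div_lt_iff₀ (by norm_num : (0:ℚ) < 3)]
    exact_mod_cast (by omega : n < l * 3)
  · -- arm = 1
    by_cases hA : ((1 : ℕ) : ℚ) / ((l : ℚ) + 1) < (3 : ℚ) / (n : ℚ)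
    · obtain ⟨hl0, hB⟩ := hnd hA
      have hlQ : (0 : ℚ) < (l : ℚ) := by
        have : 0 < l := Nat.pos_of_ne_zero hl0
        exact_mod_cast this
      rw [div_le_div_iff₀ hlQ hnQ] at hB
      push_cast at hB
      norm_num at hB
      have h2n : 2 * n ≤ 3 * l := by exact_mod_cast hB
      have hx2 : (x.2 : ℕ) < n := x.2.isLt
      have hc0n : (P.1 0 : ℕ) ≤ n := Nat.lt_succ_iff.mp (P.1 0).isLt
      omega
    · left
      refine ⟨rfl, ?_⟩
      rw [not_lt, div_le_div_iff₀ hnQ (by positivity : (0:ℚ) < (l : ℚ) + 1)] at hA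
      push_cast at hA
      norm_num at hA
      have h3l : 3 * (l + 1) ≤ n := by exact_mod_cast hA
      have hne : 3 * (l + 1) ≠ n := fun h => h3 ⟨l + 1, h.symm⟩
      have hlt : 3 * (l + 1) < n := lt_of_le_of_ne h3l hne
      rw [lt_sub_iff_add_lt, lt_div_iff₀ (by norm_num : (0:ℚ) < 3)]
      exact_mod_cast (by omega : (l + 1) * 3 < n)
end

section
/- Let n be a positive integer not divisible by 3, let Π be a (3,n)-Dyck path, let k be the number of cells of λ(Π) in the first column of the lattice and ℓ the number of cells of λ(Π) in the second column. If k < n/3, then dinv(Π) = k and skips(Π) = ℓ. -/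
open MvPolynomial

lemma fin3cases (i : Fin 3) : i = 0 ∨ i = 1 ∨ i = 2 := by revert i; decide

lemma posRank_iff {n : ℕ} (r : ℤ) :
    r ∈ posRank n ↔ 0 < r ∧ ((3 ∣ r + n ∧ r ≤ 2*n - 3) ∨ (3 ∣ r + 2*n ∧ r ≤ n - 3)) := by
  constructor
  · rintro ⟨hr, ⟨i, j⟩, hx⟩
    have hj := j.isLt
    simp only [cellRank] at hx
    refine ⟨hr, ?_⟩
    rcases fin3cases i with rfl | rfl | rfl
    · left; simp at hx; constructor <;> omega
    · right; simp at hx; constructor <;> omega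
    · exfalso; simp at hx; omega
  · rintro ⟨hr, h | h⟩
    · refine ⟨hr, ⟨(0 : Fin 3), ⟨((r + n)/3).toNat, by omega⟩⟩, ?_⟩
      simp only [cellRank]
      push_cast
      omega
    · refine ⟨hr, ⟨(1 : Fin 3), ⟨((r + 2*n)/3).toNat, by omega⟩⟩, ?_⟩
      simp only [cellRank]
      push_cast
      omega

lemma marked_iff {n : ℕ} (P : DyckPath 3 n) (hc2 : (P.1 2 : ℕ) = 0) (v : ℤ) :
    v ∈ markedRank P ↔
      (3 ∣ v + n ∧ 2*(n:ℤ) - 3*(P.1 0 : ℕ) ≤ v ∧ v ≤ 2*n - 3) ∨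
      (3 ∣ v + 2*n ∧ (n:ℤ) - 3*(P.1 1 : ℕ) ≤ v ∧ v ≤ n - 3) := by
  have hb0 := (P.1 0).isLt
  have hb1 := (P.1 1).isLt
  constructor
  · rintro ⟨⟨i, j⟩, hx, hv⟩
    have hj := j.isLt
    simp only [DyckPath.cellsAbove, Set.mem_setOf_eq] at hx
    simp only [cellRank] at hv
    rcases fin3cases i with rfl | rfl | rfl
    · left; simp at hv hx; refine ⟨by omega, by omega, by omega⟩
    · right; simp at hv hx; refine ⟨by omega, by omega, by omega⟩
    · exfalso; simp [hc2] at hx; omega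
  · rintro (⟨h1, h2, h3⟩ | ⟨h1, h2, h3⟩)
    · refine ⟨⟨(0 : Fin 3), ⟨((v + n)/3).toNat, by omega⟩⟩, ?_, ?_⟩
      · simp only [DyckPath.cellsAbove, Set.mem_setOf_eq]
        omega
      · simp only [cellRank]; push_cast; omega
    · refine ⟨⟨(1 : Fin 3), ⟨((v + 2*n)/3).toNat, by omega⟩⟩, ?_, ?_⟩
      · simp only [DyckPath.cellsAbove, Set.mem_setOf_eq]
        omega
      · simp only [cellRank]; push_cast; omega

lemma skips_eq {n : ℕ} (hn : 0 < n) (h3 : ¬ (3 ∣ n)) (P : DyckPath 3 n)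
    (hc2 : (P.1 2 : ℕ) = 0) (hord : (P.1 1 : ℕ) ≤ (P.1 0 : ℕ))
    (hsm : 3 * (P.1 0 : ℕ) < n) :
    P.skips = (P.1 1 : ℕ) := by
  classical
  unfold DyckPath.skips
  have hset : {r : ℤ | r ∈ posRank n ∧ r ∉ markedRank P ∧
      (∃ l ∈ markedRank P, l < r) ∧
      ∃ s ∈ markedRank P, r < s ∧ ∀ t ∈ posRank n, r < t → s ≤ t}
      = ↑((Finset.range (P.1 1 : ℕ)).image
          (fun i => if i + 1 = (P.1 1 : ℕ) then 2*(n:ℤ) - 3*(P.1 0 : ℕ) - 3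
            else (n:ℤ) - 3*(P.1 1 : ℕ) + (n:ℤ)%3 + 3*i)) := by
    ext v
    simp only [Set.mem_setOf_eq, Finset.coe_image, Set.mem_image, Finset.mem_coe,
      Finset.mem_range]
    constructor
    · rintro ⟨hvp, hvm, ⟨l, hl, hlv⟩, s, hs, hvs, hmin⟩
      rw [posRank_iff] at hvp
      rw [marked_iff P hc2] at hl hs
      simp only [marked_iff P hc2] at hvm
      obtain ⟨hv0, hvcase⟩ := hvp
      rcases hvcase with ⟨hd, hb⟩ | ⟨hd, hb⟩
      · by_cases htop : v = 2*(n:ℤ) - 3*(P.1 0 : ℕ) - 3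
        · refine ⟨(P.1 1 : ℕ) - 1, by omega, ?_⟩
          rw [if_pos (by omega)]; omega
        · have hv6 : v ≤ 2*(n:ℤ) - 3*(P.1 0 : ℕ) - 6 := by omega
          have hs3 : s ≤ v + 3 :=
            hmin (v+3) ((posRank_iff _).mpr ⟨by omega, Or.inl ⟨by omega, by omega⟩⟩)
              (by omega)
          have hsd : 3 ∣ s + 2*(n:ℤ) ∧ (n:ℤ) - 3*(P.1 1 : ℕ) ≤ s ∧ s ≤ (n:ℤ) - 3 := by
            rcases hs with h' | h'
            · exfalso; omega
            · exact h'
          have hlo : (n:ℤ) - 3*(P.1 1 : ℕ) < v := by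
            rcases hl with h' | h' <;> omega
          refine ⟨((v - ((n:ℤ) - 3*(P.1 1 : ℕ)) - (n:ℤ)%3)/3).toNat, by omega, ?_⟩
          rw [if_neg (by omega)]
          omega
      · exfalso; omega
    · rintro ⟨i, hi, rfl⟩
      by_cases htop : i + 1 = (P.1 1 : ℕ)
      · rw [if_pos htop]
        refine ⟨(posRank_iff _).mpr ⟨by omega, Or.inl ⟨by omega, by omega⟩⟩,
          fun h => ?_,
          ⟨(n:ℤ) - 3*(P.1 1 : ℕ),
            (marked_iff P hc2 _).mpr (Or.inr ⟨by omega, by omega, by omega⟩), by omega⟩,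
          ⟨2*(n:ℤ) - 3*(P.1 0 : ℕ),
            (marked_iff P hc2 _).mpr (Or.inl ⟨by omega, by omega, by omega⟩), by omega, ?_⟩⟩
        · rw [marked_iff P hc2] at h; omega
        · intro t ht hvt; rw [posRank_iff] at ht; omega
      · rw [if_neg htop]
        refine ⟨(posRank_iff _).mpr ⟨by omega, Or.inl ⟨by omega, by omega⟩⟩,
          fun h => ?_,
          ⟨(n:ℤ) - 3*(P.1 1 : ℕ),
            (marked_iff P hc2 _).mpr (Or.inr ⟨by omega, by omega, by omega⟩), by omega⟩,
          ⟨(n:ℤ) - 3*(P.1 1 : ℕ) + 3*i + 3,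
            (marked_iff P hc2 _).mpr (Or.inr ⟨by omega, by omega, by omega⟩), by omega, ?_⟩⟩
        · rw [marked_iff P hc2] at h; omega
        · intro t ht hvt; rw [posRank_iff] at ht; omega
  rw [hset, Set.ncard_coe_finset, Finset.card_image_of_injOn, Finset.card_range]
  intro i hi j hj h
  simp only [Finset.mem_coe, Finset.mem_range] at hi hj
  dsimp only at h
  split_ifs at h <;> omega

lemma ncard_strip {n : ℕ} (hn : 0 < n) (a : Fin 3) (lo hi : ℕ) (hhi : hi ≤ n) :
    {x : Fin 3 × Fin n | x.1 = a ∧ lo ≤ (x.2 : ℕ) ∧ (x.2 : ℕ) < hi}.ncard = hi - lo := by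
  classical
  have hset : {x : Fin 3 × Fin n | x.1 = a ∧ lo ≤ (x.2:ℕ) ∧ (x.2:ℕ) < hi}
      = ↑((Finset.range (hi - lo)).image
          (fun i => (a, (⟨(lo + i) % n, Nat.mod_lt _ hn⟩ : Fin n)))) := by
    ext ⟨b, j⟩
    simp only [Set.mem_setOf_eq, Finset.coe_image, Set.mem_image, Finset.mem_coe,
      Finset.mem_range, Prod.mk.injEq]
    constructor
    · rintro ⟨rfl, h1, h2⟩
      refine ⟨(j : ℕ) - lo, by omega, rfl, ?_⟩
      have : (lo + ((j:ℕ) - lo)) % n = (j : ℕ) := by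
        rw [Nat.mod_eq_of_lt (by omega)]; omega
      exact Fin.ext this
    · rintro ⟨i, hi', rfl, rfl⟩
      have hmod : (lo + i) % n = lo + i := Nat.mod_eq_of_lt (by omega)
      refine ⟨rfl, ?_, ?_⟩ <;> simp [hmod] <;> omega
  rw [hset, Set.ncard_coe_finset, Finset.card_image_of_injOn, Finset.card_range]
  intro i hi' j hj' h
  simp only [Finset.mem_coe, Finset.mem_range] at hi' hj'
  have := congrArg (fun p => ((p.2 : Fin n) : ℕ)) h
  simp only at this
  rw [Nat.mod_eq_of_lt (by omega), Nat.mod_eq_of_lt (by omega)] at this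
  omega

lemma col_count {n : ℕ} (hn : 0 < n) (P : DyckPath 3 n) (a : Fin 3) :
    {x ∈ P.cellsAbove | x.1 = a}.ncard = (P.1 a : ℕ) := by
  have hb := (P.1 a).isLt
  have hset : {x ∈ P.cellsAbove | x.1 = a}
      = {x : Fin 3 × Fin n | x.1 = a ∧ n - (P.1 a : ℕ) ≤ (x.2:ℕ) ∧ (x.2:ℕ) < n} := by
    ext ⟨i, j⟩
    simp only [Set.mem_setOf_eq, DyckPath.cellsAbove]
    constructor
    · rintro ⟨hy, rfl⟩; exact ⟨rfl, hy, j.isLt⟩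
    · rintro ⟨rfl, h1, _⟩; exact ⟨h1, rfl⟩
  rw [hset, ncard_strip hn a _ _ le_rfl]; omega

lemma leg_eq {n : ℕ} (hn : 0 < n) (P : DyckPath 3 n) (a : Fin 3) (j : Fin n) :
    P.leg (a, j) = (j : ℕ) - (n - (P.1 a : ℕ)) := by
  have hset : {y ∈ P.cellsAbove | y.1 = (a, j).1 ∧ y.2 < (a, j).2}
      = {x : Fin 3 × Fin n | x.1 = a ∧ n - (P.1 a : ℕ) ≤ (x.2:ℕ) ∧ (x.2:ℕ) < (j:ℕ)} := by
    ext ⟨b, j'⟩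
    simp only [Set.mem_setOf_eq, DyckPath.cellsAbove]
    constructor
    · rintro ⟨hy, rfl, h2⟩; exact ⟨rfl, hy, Fin.lt_def.mp h2⟩
    · rintro ⟨rfl, h1, h2⟩; exact ⟨h1, rfl, Fin.lt_def.mpr h2⟩
  rw [DyckPath.leg, hset, ncard_strip hn a _ _ (le_of_lt j.isLt)]

lemma arm1_eq {n : ℕ} (P : DyckPath 3 n) (hc2 : (P.1 2 : ℕ) = 0) (j : Fin n) :
    P.arm (1, j) = 0 := by
  have hset : {y ∈ P.cellsAbove | ((1 : Fin 3), j).1 < y.1 ∧ y.2 = ((1 : Fin 3), j).2}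
      = (∅ : Set (Fin 3 × Fin n)) := by
    ext ⟨b, j'⟩
    simp only [Set.mem_setOf_eq, DyckPath.cellsAbove, Set.mem_empty_iff_false, iff_false]
    rintro ⟨hy, h1, h2⟩
    rcases fin3cases b with rfl | rfl | rfl
    · exact absurd h1 (by decide)
    · exact absurd h1 (by decide)
    · rw [hc2] at hy; have := j'.isLt; omega
  rw [DyckPath.arm, hset, Set.ncard_empty]

lemma arm0_eq_one {n : ℕ} (P : DyckPath 3 n) (hc2 : (P.1 2 : ℕ) = 0) (j : Fin n)
    (hj : n - (P.1 1 : ℕ) ≤ (j : ℕ)) : P.arm (0, j) = 1 := by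
  have hset : {y ∈ P.cellsAbove | ((0 : Fin 3), j).1 < y.1 ∧ y.2 = ((0 : Fin 3), j).2}
      = {((1 : Fin 3), j)} := by
    ext ⟨b, j'⟩
    simp only [Set.mem_setOf_eq, DyckPath.cellsAbove, Set.mem_singleton_iff, Prod.mk.injEq]
    constructor
    · rintro ⟨hy, h1, rfl⟩
      rcases fin3cases b with rfl | rfl | rfl
      · exact absurd h1 (by decide)
      · exact ⟨rfl, rfl⟩
      · rw [hc2] at hy; have := j'.isLt; omega
    · rintro ⟨rfl, rfl⟩
      exact ⟨hj, by decide, rfl⟩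
  rw [DyckPath.arm, hset, Set.ncard_singleton]

lemma arm0_eq_zero {n : ℕ} (P : DyckPath 3 n) (hc2 : (P.1 2 : ℕ) = 0) (j : Fin n)
    (hj : (j : ℕ) < n - (P.1 1 : ℕ)) : P.arm (0, j) = 0 := by
  have hset : {y ∈ P.cellsAbove | ((0 : Fin 3), j).1 < y.1 ∧ y.2 = ((0 : Fin 3), j).2}
      = (∅ : Set (Fin 3 × Fin n)) := by
    ext ⟨b, j'⟩
    simp only [Set.mem_setOf_eq, DyckPath.cellsAbove, Set.mem_empty_iff_false, iff_false]
    rintro ⟨hy, h1, rfl⟩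
    rcases fin3cases b with rfl | rfl | rfl
    · exact absurd h1 (by decide)
    · exact absurd hy (by omega)
    · rw [hc2] at hy; have := j'.isLt; omega
  rw [DyckPath.arm, hset, Set.ncard_empty]

lemma dinvCond_zero {n : ℕ} (hn : 0 < n) (l : ℕ) (hl : 3 * l < n) : dinvCond 3 n 0 l := by
  have hn' : (0:ℚ) < n := by exact_mod_cast hn
  constructor
  · simpa using div_pos (by norm_num : (0:ℚ) < 3) hn'
  · rcases Nat.eq_zero_or_pos l with rfl | hl0
    · exact Or.inl rfl
    · right
      rw [div_lt_div_iff₀ hn' (by exact_mod_cast hl0)]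
      have hq : (3 * l : ℚ) < n := by exact_mod_cast hl
      push_cast at hq ⊢
      linarith

lemma not_dinvCond_one {n : ℕ} (hn : 0 < n) (l : ℕ) (hl : 3 * (l + 1) ≤ n) :
    ¬ dinvCond 3 n 1 l := by
  rintro ⟨h1, -⟩
  rw [div_lt_div_iff₀ (by positivity) (by exact_mod_cast hn)] at h1
  push_cast at h1
  have : (n : ℚ) < 3 * (l + 1) := by push_cast; linarith
  have : n < 3 * (l + 1) := by exact_mod_cast this
  omega

lemma dinv_eq {n : ℕ} (hn : 0 < n) (P : DyckPath 3 n) (hc2 : (P.1 2 : ℕ) = 0)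
    (hord : (P.1 1 : ℕ) ≤ (P.1 0 : ℕ)) (hsm : 3 * (P.1 0 : ℕ) < n) :
    P.dinv = (P.1 0 : ℕ) := by
  have hb0 := (P.1 0).isLt
  have hD : {x ∈ P.cellsAbove | dinvCond 3 n (P.arm x) (P.leg x)}
      = {x : Fin 3 × Fin n | x.1 = 0 ∧ n - (P.1 0:ℕ) ≤ (x.2:ℕ) ∧ (x.2:ℕ) < n - (P.1 1:ℕ)}
        ∪ {x : Fin 3 × Fin n | x.1 = 1 ∧ n - (P.1 1:ℕ) ≤ (x.2:ℕ) ∧ (x.2:ℕ) < n} := by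
    ext ⟨i, j⟩
    have hjn := j.isLt
    simp only [Set.mem_setOf_eq, Set.mem_union, DyckPath.cellsAbove]
    rcases fin3cases i with rfl | rfl | rfl
    · constructor
      · rintro ⟨hy, hcond⟩
        by_cases hj : (j:ℕ) < n - (P.1 1 : ℕ)
        · exact Or.inl ⟨rfl, hy, hj⟩
        · exfalso
          rw [arm0_eq_one P hc2 j (by omega), leg_eq hn P 0 j] at hcond
          exact not_dinvCond_one hn _ (by omega) hcond
      · rintro (⟨-, h1, h2⟩ | ⟨h0, -⟩)
        · refine ⟨h1, ?_⟩
          rw [arm0_eq_zero P hc2 j h2, leg_eq hn P 0 j]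
          exact dinvCond_zero hn _ (by omega)
        · exact absurd h0 (by decide)
    · constructor
      · rintro ⟨hy, -⟩; exact Or.inr ⟨rfl, hy, hjn⟩
      · rintro (⟨h0, -⟩ | ⟨-, h1, -⟩)
        · exact absurd h0 (by decide)
        · refine ⟨h1, ?_⟩
          rw [arm1_eq P hc2 j, leg_eq hn P 1 j]
          exact dinvCond_zero hn _ (by omega)
    · constructor
      · rintro ⟨hy, -⟩; rw [hc2] at hy; omega
      · rintro (⟨h0, -⟩ | ⟨h0, -⟩) <;> exact absurd h0 (by decide)
  rw [DyckPath.dinv, hD,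
    Set.ncard_union_eq ?dis (Set.toFinite _) (Set.toFinite _),
    ncard_strip hn 0 _ _ (by omega), ncard_strip hn 1 _ _ le_rfl]
  · omega
  case dis =>
    rw [Set.disjoint_left]
    rintro ⟨i, j⟩ ⟨h1, -⟩ ⟨h2, -⟩
    rw [h1] at h2
    exact absurd h2 (by decide)

/-- If `k`, the number of cells of `λ(Π)` in the first column,
satisfies `k < n/3`, then `dinv(Π) = k` and `skips(Π) = ℓ`, where `ℓ` is the number of
cells of `λ(Π)` in the second column. -/
theorem dinv_skips_of_small_first_column (n : ℕ) (hn : 0 < n) (h3 : ¬ (3 ∣ n))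
    (P : DyckPath 3 n) (k ℓ : ℕ)
    (hk : k = {x ∈ P.cellsAbove | x.1 = 0}.ncard)
    (hl : ℓ = {x ∈ P.cellsAbove | x.1 = 1}.ncard)
    (hkn : (k : ℚ) < (n : ℚ) / 3) :
    P.dinv = k ∧ P.skips = ℓ := by
  have hc2 : (P.1 2 : ℕ) = 0 := by
    have h := P.2.2 2
    simp only [show ((2 : Fin 3) : ℕ) = 2 from rfl] at h
    omega
  have hord : (P.1 1 : ℕ) ≤ (P.1 0 : ℕ) := P.2.1 0 1 (by decide)
  have hk' : k = (P.1 0 : ℕ) := by rw [hk, col_count hn P 0]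
  have hl' : ℓ = (P.1 1 : ℕ) := by rw [hl, col_count hn P 1]
  have hsm : 3 * (P.1 0 : ℕ) < n := by
    have h1 : (k:ℚ) * 3 < n := (lt_div_iff₀ (by norm_num)).mp hkn
    have h2 : k * 3 < n := by exact_mod_cast h1
    omega
  exact ⟨by rw [hk']; exact dinv_eq hn P hc2 hord hsm,
    by rw [hl']; exact skips_eq hn h3 P hc2 hord hsm⟩
end
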